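/- A *-external sequent A₁, …, A_n → B is derivable in L*ω if and only if for all instance lists Π₁ ∈ Inst(A₁), …, Π_n ∈ Inst(A_n), the product-free sequent Π₁, …, Π_n → B is derivable in L^Λ(\,/). -/

import Mathlib

/-- Formulas of the Lambek calculus with iteration L*ω: variables `p n`,
left division `A \ B`, right division `B / A` (written `rdiv B A`),
product `A · B` and Kleene star `A*`. -/
inductive LFormula : Type
  | var : ℕ → LFormula
  | ldiv : LFormula → LFormula → LFormula   -- ldiv A B  is  A \ B
  | rdiv : LFormula → LFormula → LFormula   -- rdiv B A  is  B / A
  | mul : LFormula → LFormula → LFormula    -- A · B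
  | star : LFormula → LFormula              -- A*
  deriving DecidableEq

/-- Derivability in L*ω, as the least set of sequents (`LDer Γ B` means `Γ → B` is
derivable) containing the identity axioms and closed under the rules of the calculus,
including the ω-rule for Kleene star. -/
inductive LDer : List LFormula → LFormula → Prop
  /-- identity axiom A → A -/
  | id (A : LFormula) : LDer [A] A
  /-- (\→): from Π → A and Γ,B,Δ → C infer Γ,Π,A\B,Δ → C -/
  | ldiv_left (P Γ Δ : List LFormula) (A B C : LFormula) :
      LDer P A → LDer (Γ ++ [B] ++ Δ) C →
      LDer (Γ ++ P ++ [LFormula.ldiv A B] ++ Δ) C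
  /-- (→\): from A,Π → B infer Π → A\B -/
  | ldiv_right (P : List LFormula) (A B : LFormula) :
      LDer (A :: P) B → LDer P (LFormula.ldiv A B)
  /-- (/→): from Π → A and Γ,B,Δ → C infer Γ,B/A,Π,Δ → C -/
  | rdiv_left (P Γ Δ : List LFormula) (A B C : LFormula) :
      LDer P A → LDer (Γ ++ [B] ++ Δ) C →
      LDer (Γ ++ [LFormula.rdiv B A] ++ P ++ Δ) C
  /-- (→/): from Π,A → B infer Π → B/A -/
  | rdiv_right (P : List LFormula) (A B : LFormula) :
      LDer (P ++ [A]) B → LDer P (LFormula.rdiv B A)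
  /-- (·→): from Γ,A,B,Δ → C infer Γ,A·B,Δ → C -/
  | mul_left (Γ Δ : List LFormula) (A B C : LFormula) :
      LDer (Γ ++ [A, B] ++ Δ) C → LDer (Γ ++ [LFormula.mul A B] ++ Δ) C
  /-- (→·): from Γ → A and Δ → B infer Γ,Δ → A·B -/
  | mul_right (Γ Δ : List LFormula) (A B : LFormula) :
      LDer Γ A → LDer Δ B → LDer (Γ ++ Δ) (LFormula.mul A B)
  /-- (*→)_ω: from Γ,Aⁿ,Δ → C for every n ≥ 0 infer Γ,A*,Δ → C -/
  | star_left (Γ Δ : List LFormula) (A C : LFormula) :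
      (∀ n : ℕ, LDer (Γ ++ List.replicate n A ++ Δ) C) →
      LDer (Γ ++ [LFormula.star A] ++ Δ) C
  /-- (→*)_n: from Π₁ → A, …, Π_n → A infer Π₁,…,Π_n → A* -/
  | star_right (Ps : List (List LFormula)) (A : LFormula) :
      (∀ P ∈ Ps, LDer P A) → LDer Ps.flatten (LFormula.star A)


/-- A formula is product-free if it is built from variables using only \\ and /. -/
def ProdFree : LFormula → Prop
  | LFormula.var _ => True
  | LFormula.ldiv A B => ProdFree A ∧ ProdFree B
  | LFormula.rdiv B A => ProdFree B ∧ ProdFree A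
  | LFormula.mul _ _ => False
  | LFormula.star _ => False

/-- A formula is *-external if no · or * occurs in it within the scope of \\ or /. -/
inductive StarExt : LFormula → Prop
  | pf {A : LFormula} : ProdFree A → StarExt A
  | mul {A B : LFormula} : StarExt A → StarExt B → StarExt (LFormula.mul A B)
  | star {A : LFormula} : StarExt A → StarExt (LFormula.star A)

/-- The instances of a *-external formula: `Inst A Γ` says that the list Γ of
product-free formulas is an instance of A (Inst(A) = {A} for product-free A;
instances of A·B are concatenations of instances of A and of B; instances of A*
are concatenations of finitely many instances of A). -/
inductive Inst : LFormula → List LFormula → Prop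
  | pf {A : LFormula} : ProdFree A → Inst A [A]
  | mul {A B : LFormula} {Γ Δ : List LFormula} :
      Inst A Γ → Inst B Δ → Inst (LFormula.mul A B) (Γ ++ Δ)
  | star_nil {A : LFormula} : Inst (LFormula.star A) []
  | star_cons {A : LFormula} {Γ Δ : List LFormula} :
      Inst A Γ → Inst (LFormula.star A) Δ → Inst (LFormula.star A) (Γ ++ Δ)

/-- Derivability in the product-free Lambek calculus L^Λ(\\,/) allowing empty
antecedents: the least set of sequents of product-free formulas containing the
identity axioms and closed under the four division rules. -/
inductive PDer : List LFormula → LFormula → Prop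
  | id (A : LFormula) : ProdFree A → PDer [A] A
  | ldiv_left (P Γ Δ : List LFormula) (A B C : LFormula) :
      PDer P A → PDer (Γ ++ [B] ++ Δ) C →
      PDer (Γ ++ P ++ [LFormula.ldiv A B] ++ Δ) C
  | ldiv_right (P : List LFormula) (A B : LFormula) :
      PDer (A :: P) B → PDer P (LFormula.ldiv A B)
  | rdiv_left (P Γ Δ : List LFormula) (A B C : LFormula) :
      PDer P A → PDer (Γ ++ [B] ++ Δ) C →
      PDer (Γ ++ [LFormula.rdiv B A] ++ P ++ Δ) C
  | rdiv_right (P : List LFormula) (A B : LFormula) :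
      PDer (P ++ [A]) B → PDer P (LFormula.rdiv B A)


/-! An instance of `A \ B` or `B / A` exists only when the formula is product-free, so in a
derivation of a sequent with product-free succedent, read through instances of its antecedent,
every division rule acts on product-free formulas and is a rule of L^Λ(\,/), `(·→)` and
`(*→)_ω` merely regroup the instance lists, and `(→·)`, `(→*)` cannot occur: induction on the
L*ω derivation suffices, with no cut elimination. Conversely, `(·→)` and `(*→)_ω` rebuild every
*-external formula on the left from its instances, and L^Λ(\,/) is a fragment of L*ω. -/

open LFormula

def Insts (Γ Φ : List LFormula) : Prop :=
  ∃ Ps : List (List LFormula), List.Forall₂ Inst Γ Ps ∧ Ps.flatten = Φ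

section Instances

variable {A B : LFormula} {Γ Δ Θ Φ Ψ : List LFormula}

lemma Inst.eq_singleton (h : Inst A Θ) (hA : ProdFree A) : Θ = [A] := by
  cases h with
  | pf _ => rfl
  | _ => exact hA.elim

lemma Inst.prodFree_ldiv (h : Inst (ldiv A B) Θ) : ProdFree (ldiv A B) := by
  cases h
  assumption

lemma Inst.prodFree_rdiv (h : Inst (rdiv B A) Θ) : ProdFree (rdiv B A) := by
  cases h
  assumption

lemma insts_nil : Insts [] [] := ⟨[], .nil, rfl⟩

lemma insts_cons_iff : Insts (A :: Γ) Φ ↔ ∃ Θ Ψ, Φ = Θ ++ Ψ ∧ Inst A Θ ∧ Insts Γ Ψ := by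
  constructor
  · rintro ⟨_, h, rfl⟩
    obtain ⟨Θ, Ps, hA, hΓ, rfl⟩ := List.forall₂_cons_left_iff.mp h
    exact ⟨Θ, Ps.flatten, rfl, hA, Ps, hΓ, rfl⟩
  · rintro ⟨Θ, _, rfl, hA, Ps, hΓ, rfl⟩
    exact ⟨Θ :: Ps, .cons hA hΓ, rfl⟩

lemma Insts.cons (hA : Inst A Θ) (hΓ : Insts Γ Φ) : Insts (A :: Γ) (Θ ++ Φ) :=
  insts_cons_iff.mpr ⟨Θ, Φ, rfl, hA, hΓ⟩

lemma insts_singleton_iff : Insts [A] Θ ↔ Inst A Θ := by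
  refine ⟨fun ⟨Ps, h, hΘ⟩ => ?_, fun h => ⟨[Θ], .cons h .nil, by simp⟩⟩
  obtain ⟨Θ', _, hA, h', rfl⟩ := List.forall₂_cons_left_iff.mp h
  rw [List.forall₂_nil_left_iff.mp h'] at hΘ
  simpa [← hΘ] using hA

lemma Insts.append : Insts Γ Φ → Insts Δ Ψ → Insts (Γ ++ Δ) (Φ ++ Ψ)
  | ⟨Ps, hΓ, hΦ⟩, ⟨Qs, hΔ, hΨ⟩ => ⟨Ps ++ Qs, List.rel_append hΓ hΔ, by simp [hΦ, hΨ]⟩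

lemma Insts.split_append (h : Insts (Γ ++ Δ) Φ) :
    ∃ Φ₁ Φ₂, Φ = Φ₁ ++ Φ₂ ∧ Insts Γ Φ₁ ∧ Insts Δ Φ₂ := by
  induction Γ generalizing Φ with
  | nil => exact ⟨[], Φ, rfl, insts_nil, h⟩
  | cons A Γ ih =>
    obtain ⟨Θ, Ψ, rfl, hA, hΨ⟩ := insts_cons_iff.mp h
    obtain ⟨Ψ₁, Ψ₂, rfl, hΓ, hΔ⟩ := ih hΨ
    exact ⟨Θ ++ Ψ₁, Ψ₂, (List.append_assoc ..).symm, Insts.cons hA hΓ, hΔ⟩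

lemma Insts.split_middle (h : Insts (Γ ++ [A] ++ Δ) Φ) :
    ∃ Φ₁ Θ Φ₂, Φ = Φ₁ ++ Θ ++ Φ₂ ∧ Insts Γ Φ₁ ∧ Inst A Θ ∧ Insts Δ Φ₂ := by
  obtain ⟨Φ', Φ₂, rfl, h', hΔ⟩ := h.split_append
  obtain ⟨Φ₁, Θ, rfl, hΓ, hA⟩ := h'.split_append
  exact ⟨Φ₁, Θ, Φ₂, rfl, hΓ, insts_singleton_iff.mp hA, hΔ⟩

lemma Inst.insts_of_mul (h : Inst (LFormula.mul A B) Θ) : Insts [A, B] Θ := by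
  cases h with
  | pf h => exact h.elim
  | mul hA hB => simpa using Insts.cons hA (Insts.cons hB insts_nil)

lemma Inst.exists_insts_replicate_of_star (h : Inst (LFormula.star A) Θ) :
    ∃ n, Insts (List.replicate n A) Θ := by
  generalize hX : LFormula.star A = X at h
  induction h with
  | pf h => exact (hX ▸ h).elim
  | mul => cases hX
  | star_nil => exact ⟨0, insts_nil⟩
  | star_cons hA _ _ ih =>
    cases hX
    obtain ⟨n, hn⟩ := ih rfl
    exact ⟨n + 1, Insts.cons hA hn⟩

end Instances

theorem LDer.pder_of_insts {Γ Φ : List LFormula} {B : LFormula} (h : LDer Γ B)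
    (hB : ProdFree B) (hΦ : Insts Γ Φ) : PDer Φ B := by
  induction h generalizing Φ with
  | id A => rw [(insts_singleton_iff.mp hΦ).eq_singleton hB]; exact .id A hB
  | ldiv_left P Γ Δ A B C _ _ ihP ihC =>
    obtain ⟨Φ', Θ, Φ₃, rfl, hΓP, hAB, hΔ⟩ := hΦ.split_middle
    obtain ⟨Φ₁, Φ₂, rfl, hΓ, hP⟩ := hΓP.split_append
    have hpf := hAB.prodFree_ldiv
    rw [hAB.eq_singleton hpf]
    exact .ldiv_left _ _ _ A B C (ihP hpf.1 hP)
      (ihC hB ((hΓ.append (insts_singleton_iff.mpr (.pf hpf.2))).append hΔ))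
  | rdiv_left P Γ Δ A B C _ _ ihP ihC =>
    rw [List.append_assoc _ P] at hΦ
    obtain ⟨Φ₁, Θ, Φ', rfl, hΓ, hBA, hPΔ⟩ := hΦ.split_middle
    obtain ⟨Φ₂, Φ₃, rfl, hP, hΔ⟩ := hPΔ.split_append
    have hpf := hBA.prodFree_rdiv
    rw [hBA.eq_singleton hpf, ← List.append_assoc]
    exact .rdiv_left _ _ _ A B C (ihP hpf.2 hP)
      (ihC hB ((hΓ.append (insts_singleton_iff.mpr (.pf hpf.1))).append hΔ))
  | ldiv_right P A B _ ih =>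
    exact .ldiv_right _ A B (ih hB.2 (Insts.cons (.pf hB.1) hΦ))
  | rdiv_right P A B _ ih =>
    exact .rdiv_right _ A B (ih hB.1 (hΦ.append (insts_singleton_iff.mpr (.pf hB.2))))
  | mul_left Γ Δ A B C _ ih =>
    obtain ⟨Φ₁, Θ, Φ₂, rfl, hΓ, hAB, hΔ⟩ := hΦ.split_middle
    exact ih hB ((hΓ.append hAB.insts_of_mul).append hΔ)
  | star_left Γ Δ A C _ ih =>
    obtain ⟨Φ₁, Θ, Φ₂, rfl, hΓ, hA, hΔ⟩ := hΦ.split_middle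
    obtain ⟨n, hn⟩ := hA.exists_insts_replicate_of_star
    exact ih n hB ((hΓ.append hn).append hΔ)
  | mul_right => exact hB.elim
  | star_right => exact hB.elim

theorem PDer.toLDer {Γ : List LFormula} {B : LFormula} (h : PDer Γ B) : LDer Γ B := by
  induction h with
  | id A _ => exact .id A
  | ldiv_left P Γ Δ A B C _ _ ihP ihC => exact .ldiv_left P Γ Δ A B C ihP ihC
  | ldiv_right P A B _ ih => exact .ldiv_right P A B ih
  | rdiv_left P Γ Δ A B C _ _ ihP ihC => exact .rdiv_left P Γ Δ A B C ihP ihC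
  | rdiv_right P A B _ ih => exact .rdiv_right P A B ih

def InstLeftRule (A : LFormula) : Prop :=
  ∀ (Δ Ξ : List LFormula) (C : LFormula),
    (∀ Θ, Inst A Θ → LDer (Δ ++ Θ ++ Ξ) C) → LDer (Δ ++ [A] ++ Ξ) C

section InstLeftRule

variable {A B : LFormula}

lemma instLeftRule_of_prodFree (hA : ProdFree A) : InstLeftRule A :=
  fun _ _ _ h => h [A] (.pf hA)

lemma InstLeftRule.mul (hA : InstLeftRule A) (hB : InstLeftRule B) :
    InstLeftRule (LFormula.mul A B) := by
  intro Δ Ξ C h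
  refine .mul_left Δ Ξ A B C ?_
  simpa using hA Δ (B :: Ξ) C fun Θa hΘa => by
    simpa using hB (Δ ++ Θa) Ξ C fun Θb hΘb => by
      simpa using h (Θa ++ Θb) (.mul hΘa hΘb)

lemma InstLeftRule.star (hA : InstLeftRule A) : InstLeftRule (LFormula.star A) := by
  intro Δ Ξ C h
  refine .star_left Δ Ξ A C fun n => ?_
  induction n generalizing Δ with
  | zero => simpa using h [] .star_nil
  | succ n ih =>
    simpa [List.replicate_succ] using hA Δ (List.replicate n A ++ Ξ) C fun Θ hΘ => by
      simpa using ih (Δ ++ Θ) fun Θ' hΘ' => by simpa using h (Θ ++ Θ') (.star_cons hΘ hΘ')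

lemma StarExt.instLeftRule (hA : StarExt A) : InstLeftRule A := by
  induction hA with
  | pf h => exact instLeftRule_of_prodFree h
  | mul _ _ ihA ihB => exact ihA.mul ihB
  | star _ ih => exact ih.star

end InstLeftRule

theorem LDer.of_forall_insts {Γ Δ Ξ : List LFormula} {C : LFormula}
    (hΓ : ∀ A ∈ Γ, StarExt A) (h : ∀ Φ, Insts Γ Φ → LDer (Δ ++ Φ ++ Ξ) C) :
    LDer (Δ ++ Γ ++ Ξ) C := by
  induction Γ generalizing Δ with
  | nil => simpa using h [] insts_nil
  | cons A Γ ih =>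
    simpa using (hΓ A (by simp)).instLeftRule Δ (Γ ++ Ξ) C fun Θ hΘ => by
      simpa using ih (fun B hB => hΓ B (by simp [hB])) (Δ := Δ ++ Θ) fun Φ hΦ => by
        simpa using h (Θ ++ Φ) (Insts.cons hΘ hΦ)

/-- A *-external sequent A₁,…,A_n → B is derivable in L*ω iff all of its instance
sequents Π₁,…,Π_n → B (with Π_i ∈ Inst(A_i)) are derivable in L^Λ(\\,/). -/
theorem star_external_iff_instances (Γ : List LFormula) (B : LFormula)
    (hΓ : ∀ A ∈ Γ, StarExt A) (hB : ProdFree B) :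
    LDer Γ B ↔ ∀ Ps : List (List LFormula), List.Forall₂ Inst Γ Ps →
      PDer Ps.flatten B := by
  refine ⟨fun h Ps hPs => h.pder_of_insts hB ⟨Ps, hPs, rfl⟩, fun h => ?_⟩
  simpa using LDer.of_forall_insts (Δ := []) (Ξ := []) hΓ fun _ ⟨Ps, hPs, hΦ⟩ => by
    simpa [← hΦ] using (h Ps hPs).toLDer
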